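/- arXiv:2208.13058 — 5 statements merged into one kernel-verified Lean document; each statement's English description precedes it below -/
import Mathlib

section
/- Let d ∈ ℕ, let a b : Fin d → ℝ satisfy a i > 0 and b i > 0 for all i, let ε ≥ 0, and let r ∈ EuclideanSpace ℝ (Fin d). If δ* ∈ K(ε) satisfies ‖r − δ*‖ ≤ ‖r − δ‖ for every δ ∈ K(ε) (i.e. δ* is a Euclidean-nearest point of K(ε) to r), then for every coordinate i, either δ* i = 0 or (δ* i) * (r i) > 0; that is, every nonzero coordinate of the minimizer has the same strict sign as the corresponding coordinate of r. -/
/-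
Zeroing the `i`-th coordinate of `δ*` keeps it in `K(ε)`, because the weights are nonnegative and
every coordinate contributes to `c̄` separately. In Euclidean norm this move changes
`‖r - δ*‖²` by `2 δ*ᵢ rᵢ - δ*ᵢ²`, which is negative as soon as `δ*ᵢ ≠ 0` and `δ*ᵢ rᵢ ≤ 0`;
minimality of `δ*` therefore forces `δ*ᵢ rᵢ > 0` whenever `δ*ᵢ ≠ 0`.
-/

/-- The asymmetric weighted-ℓ1 cost
`c̄(δ) = ∑ i, (a i * max (-(δ i)) 0 + b i * max (δ i) 0)`. -/
noncomputable def cbar {d : ℕ} (a b : Fin d → ℝ) (δ : EuclideanSpace ℝ (Fin d)) : ℝ :=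
  ∑ i, (a i * max (-(δ i)) 0 + b i * max (δ i) 0)

/-- The cost ball `K(ε) = {δ | c̄(δ) ≤ ε}`. -/
noncomputable def costBall {d : ℕ} (a b : Fin d → ℝ) (ε : ℝ) :
    Set (EuclideanSpace ℝ (Fin d)) :=
  {δ | cbar a b δ ≤ ε}

open EuclideanSpace

theorem EuclideanSpace.norm_sub_sub_single_lt {ι : Type*} [Fintype ι] [DecidableEq ι]
    (r δ : EuclideanSpace ℝ ι) {i : ι} (hδ : δ i ≠ 0) (hsign : δ i * r i ≤ 0) :
    ‖r - (δ - single i (δ i))‖ < ‖r - δ‖ := by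
  have hsq : ‖r - (δ - single i (δ i))‖ ^ 2 = ‖r - δ‖ ^ 2 + (2 * (δ i * r i) - δ i ^ 2) := by
    rw [sub_sub_eq_add_sub, add_sub_right_comm, norm_add_sq_real,
      inner_single_right, PiLp.norm_single]
    simp only [PiLp.sub_apply, conj_trivial, Real.norm_eq_abs, sq_abs]
    ring
  have hneg : 2 * (δ i * r i) - δ i ^ 2 < 0 := by
    linarith [sq_pos_of_ne_zero hδ]
  exact lt_of_pow_lt_pow_left₀ 2 (norm_nonneg _) (by linarith)

theorem cbar_sub_single_le {d : ℕ} {a b : Fin d → ℝ} {i : Fin d} (ha : 0 ≤ a i) (hb : 0 ≤ b i)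
    (δ : EuclideanSpace ℝ (Fin d)) : cbar a b (δ - single i (δ i)) ≤ cbar a b δ := by
  refine Finset.sum_le_sum fun j _ => ?_
  rcases eq_or_ne j i with rfl | hj
  · simp only [PiLp.sub_apply, PiLp.single_apply, if_true, sub_self, neg_zero, max_self,
      mul_zero, add_zero]
    positivity
  · simp [hj]

theorem stmt_0_general {d : ℕ} (a b : Fin d → ℝ) (ha : ∀ i, 0 < a i) (hb : ∀ i, 0 < b i)
    (ε : ℝ) (r : EuclideanSpace ℝ (Fin d))
    (δstar : EuclideanSpace ℝ (Fin d)) (hmem : δstar ∈ costBall a b ε)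
    (hmin : ∀ δ ∈ costBall a b ε, ‖r - δstar‖ ≤ ‖r - δ‖) :
    ∀ i, δstar i = 0 ∨ δstar i * r i > 0 := by
  intro i
  by_contra! ⟨hne, hsign⟩
  have hmem' : δstar - single i (δstar i) ∈ costBall a b ε :=
    (cbar_sub_single_le (ha i).le (hb i).le δstar).trans hmem
  exact (hmin _ hmem').not_gt (norm_sub_sub_single_lt r δstar hne hsign)

/-- Every nonzero coordinate of a Euclidean-nearest point of `K(ε)` to `r` has the same
strict sign as the corresponding coordinate of `r`. -/
theorem stmt_0 {d : ℕ} (a b : Fin d → ℝ) (ha : ∀ i, 0 < a i) (hb : ∀ i, 0 < b i)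
    (ε : ℝ) (hε : 0 ≤ ε) (r : EuclideanSpace ℝ (Fin d))
    (δstar : EuclideanSpace ℝ (Fin d)) (hmem : δstar ∈ costBall a b ε)
    (hmin : ∀ δ ∈ costBall a b ε, ‖r - δstar‖ ≤ ‖r - δ‖) :
    ∀ i, δstar i = 0 ∨ δstar i * r i > 0 :=
  stmt_0_general a b ha hb ε r δstar hmem hmin
end

section
/- Let d ∈ ℕ, let a b : Fin d → ℝ satisfy a i > 0 and b i > 0 for all i, and let r δ ∈ EuclideanSpace ℝ (Fin d). If there is a coordinate i with (δ i) * (r i) < 0, then the vector δ' defined by δ' i = 0 and δ' j = δ j for all j ≠ i satisfies c̄(δ') < c̄(δ) and ‖r − δ'‖ < ‖r − δ‖. In particular, if δ ∈ K(ε) then δ' ∈ K(ε) and δ is strictly improved by zeroing out any coordinate whose sign disagrees with r. -/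
/-! Both the cost and the squared distance to `r` are sums of one-variable functions of the
coordinates, so zeroing the coordinate `i` changes only the `i`-th summand. For the cost that
summand drops from a positive value to `0`; for the distance it drops from `(r i - δ i) ^ 2` to
`(r i) ^ 2`, which is smaller because `δ i` and `r i` have opposite signs. -/

theorem Fintype.sum_update_lt {ι α M : Type*} [Fintype ι] [DecidableEq ι] [AddCommMonoid M]
    [PartialOrder M] [IsOrderedCancelAddMonoid M] (g : ι → α → M) (x : ι → α) (i : ι) (c : α)
    (h : g i c < g i (x i)) :
    ∑ j, g j (Function.update x i c j) < ∑ j, g j (x j) := by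
  refine Finset.sum_lt_sum (fun j _ => ?_) ⟨i, Finset.mem_univ i, by simpa using h⟩
  rcases eq_or_ne j i with rfl | hj
  · simpa using h.le
  · simp [Function.update_of_ne hj]

theorem weighted_hinge_pos {a b t : ℝ} (ha : 0 < a) (hb : 0 < b) (ht : t ≠ 0) :
    0 < a * max (-t) 0 + b * max t 0 := by
  rcases ht.lt_or_gt with ht | ht
  · have : 0 < a * max (-t) 0 := mul_pos ha (lt_max_of_lt_left (neg_pos.mpr ht))
    positivity
  · have : 0 < b * max t 0 := mul_pos hb (lt_max_of_lt_left ht)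
    positivity

theorem sq_lt_sq_sub_of_mul_neg {s t : ℝ} (h : t * s < 0) : s ^ 2 < (s - t) ^ 2 := by
  nlinarith [sq_nonneg t]

theorem cbar_update_zero_lt {d : ℕ} {a b : Fin d → ℝ} (ha : ∀ i, 0 < a i) (hb : ∀ i, 0 < b i)
    (δ : EuclideanSpace ℝ (Fin d)) {i : Fin d} (hi : δ i ≠ 0) :
    cbar a b (WithLp.toLp 2 (Function.update δ i 0)) < cbar a b δ :=
  Fintype.sum_update_lt (fun j t => a j * max (-t) 0 + b j * max t 0) δ i 0 <| by
    simpa using weighted_hinge_pos (ha i) (hb i) hi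

theorem norm_sub_update_zero_lt {d : ℕ} (r δ : EuclideanSpace ℝ (Fin d)) {i : Fin d}
    (hi : δ i * r i < 0) :
    ‖r - WithLp.toLp 2 (Function.update δ i 0)‖ < ‖r - δ‖ := by
  refine lt_of_pow_lt_pow_left₀ 2 (norm_nonneg _) ?_
  simp only [EuclideanSpace.real_norm_sq_eq, PiLp.sub_apply]
  exact Fintype.sum_update_lt (fun j t => (r j - t) ^ 2) δ i 0 <| by
    simpa using sq_lt_sq_sub_of_mul_neg hi

/-- Zeroing out a coordinate of `δ` whose sign disagrees with that of `r` strictly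
decreases both the cost and the Euclidean distance to `r`; in particular membership
in the cost ball `K(ε)` is preserved. -/
theorem stmt_1 {d : ℕ} (a b : Fin d → ℝ) (ha : ∀ i, 0 < a i) (hb : ∀ i, 0 < b i)
    (r δ : EuclideanSpace ℝ (Fin d)) (i : Fin d) (hi : δ i * r i < 0)
    (δ' : EuclideanSpace ℝ (Fin d)) (hδ' : δ' = Function.update δ i 0) :
    cbar a b δ' < cbar a b δ ∧ ‖r - δ'‖ < ‖r - δ‖ ∧
      ∀ ε : ℝ, δ ∈ costBall a b ε → δ' ∈ costBall a b ε := by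
  obtain rfl : δ' = WithLp.toLp 2 (Function.update δ i 0) := by
    rw [← hδ', WithLp.toLp_ofLp]
  have hδi : δ i ≠ 0 := fun h => by simp [h] at hi
  have hcost := cbar_update_zero_lt ha hb δ hδi
  exact ⟨hcost, norm_sub_update_zero_lt r δ hi, fun ε hε => hcost.le.trans hε⟩
end

section
/- Let d ∈ ℕ, let a b : Fin d → ℝ satisfy a i > 0 and b i > 0 for all i, let ε ≥ 0, and let r ∈ EuclideanSpace ℝ (Fin d) with c̄(r) > ε. If δ* ∈ K(ε) is a Euclidean-nearest point of K(ε) to r, then the cost constraint is active at the optimum: c̄(δ*) = ε. -/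
section NearestPoint

open Topology

variable {E : Type*} [NormedAddCommGroup E] [NormedSpace ℝ E]

theorem eq_of_isLocalMin_dist {r p : E} (h : IsLocalMin (fun q => dist q r) p) : p = r :=
  dist_le_zero.mp <| by
    simpa using IsMinOn.of_isLocalMin_of_convex_univ h (convexOn_univ_dist r) r

theorem apply_eq_of_isMinOn_dist_sublevel {f : E → ℝ} {ε : ℝ} {r p : E} (hr : ε < f r)
    (hfp : ContinuousAt f p) (hp : f p ≤ ε) (hmin : IsMinOn (fun q => dist q r) {q | f q ≤ ε} p) :
    f p = ε := by
  refine hp.antisymm (not_lt.mp fun hslack => ?_)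
  have hnhds : ∀ᶠ q in 𝓝 p, f q ≤ ε :=
    (hfp.eventually_lt continuousAt_const hslack).mono fun _ => le_of_lt
  have hpr : p = r := eq_of_isLocalMin_dist (hmin.isLocalMin hnhds)
  exact hr.not_ge (hpr ▸ hp)

end NearestPoint

theorem continuous_cbar {d : ℕ} (a b : Fin d → ℝ) : Continuous (cbar a b) := by
  unfold cbar
  fun_prop

theorem stmt_4_general {d : ℕ} (a b : Fin d → ℝ)
    (ε : ℝ) (r : EuclideanSpace ℝ (Fin d)) (hr : cbar a b r > ε)
    (δstar : EuclideanSpace ℝ (Fin d)) (hmem : δstar ∈ costBall a b ε)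
    (hmin : ∀ δ ∈ costBall a b ε, ‖r - δstar‖ ≤ ‖r - δ‖) :
    cbar a b δstar = ε :=
  apply_eq_of_isMinOn_dist_sublevel hr (continuous_cbar a b).continuousAt hmem <|
    isMinOn_iff.mpr fun δ hδ => by simpa only [dist_comm _ r, dist_eq_norm] using hmin δ hδ

/-- If `r` lies strictly outside the cost ball `K(ε)`, then the cost constraint is active
at any Euclidean-nearest point of `K(ε)` to `r`: `c̄(δ*) = ε`. -/
theorem stmt_4 {d : ℕ} (a b : Fin d → ℝ) (ha : ∀ i, 0 < a i) (hb : ∀ i, 0 < b i)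
    (ε : ℝ) (hε : 0 ≤ ε) (r : EuclideanSpace ℝ (Fin d)) (hr : cbar a b r > ε)
    (δstar : EuclideanSpace ℝ (Fin d)) (hmem : δstar ∈ costBall a b ε)
    (hmin : ∀ δ ∈ costBall a b ε, ‖r - δstar‖ ≤ ‖r - δ‖) :
    cbar a b δstar = ε :=
  stmt_4_general a b ε r hr δstar hmem hmin
end

section
/- Let d ∈ ℕ, let a b : Fin d → ℝ satisfy a i > 0 and b i > 0 for all i, let ε ≥ 0, and let r ∈ EuclideanSpace ℝ (Fin d). Define sign-selected weights w : Fin d → ℝ by w i = b i if r i ≥ 0 and w i = a i if r i < 0, and define the weighted ℓ1 ball L(ε) = {δ | ∑ i, w i * |δ i| ≤ ε}. Then a point δ* is a Euclidean-nearest point of K(ε) to r if and only if it is a Euclidean-nearest point of L(ε) to r; in particular the Euclidean projection of r onto the asymmetric cost ball K(ε) coincides with the Euclidean projection of r onto the symmetric weighted ℓ1 ball L(ε). -/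
/-- The symmetric weighted ℓ1 ball `L(ε) = {δ | ∑ i, w i * |δ i| ≤ ε}`. -/
noncomputable def wl1Ball {d : ℕ} (w : Fin d → ℝ) (ε : ℝ) :
    Set (EuclideanSpace ℝ (Fin d)) :=
  {δ | ∑ i, w i * |δ i| ≤ ε}

open Set

section Minimizers

variable {α β : Type*} [Preorder β] {f : α → β} {T : α → α} {s t : Set α}

theorem mem_and_forall_le_of_mapsTo_union_inter (hT : MapsTo T (s ∪ t) (s ∩ t))
    (hlt : ∀ x, T x ≠ x → f (T x) < f x) {x : α} (hx : x ∈ s) (hmin : ∀ y ∈ s, f x ≤ f y) :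
    x ∈ t ∧ ∀ y ∈ t, f x ≤ f y := by
  have hle : ∀ y, f (T y) ≤ f y := fun y => by
    by_cases h : T y = y
    · rw [h]
    · exact (hlt y h).le
  have hfix : T x = x := by
    by_contra h
    exact (hlt x h).not_ge (hmin _ (hT (Or.inl hx)).1)
  refine ⟨hfix ▸ (hT (Or.inl hx)).2, fun y hy => ?_⟩
  exact (hmin _ (hT (Or.inr hy)).1).trans (hle y)

theorem mem_and_forall_le_iff_of_mapsTo_union_inter (hT : MapsTo T (s ∪ t) (s ∩ t))
    (hlt : ∀ x, T x ≠ x → f (T x) < f x) (x : α) :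
    (x ∈ s ∧ ∀ y ∈ s, f x ≤ f y) ↔ (x ∈ t ∧ ∀ y ∈ t, f x ≤ f y) := by
  have hT' : MapsTo T (t ∪ s) (t ∩ s) := by rwa [union_comm, inter_comm]
  exact ⟨fun h => mem_and_forall_le_of_mapsTo_union_inter hT hlt h.1 h.2,
    fun h => mem_and_forall_le_of_mapsTo_union_inter hT' hlt h.1 h.2⟩

end Minimizers

section SignClip

noncomputable def signClip (s x : ℝ) : ℝ := if 0 ≤ s then max x 0 else min x 0

variable (s x : ℝ)

theorem sq_sub_signClip_le : (s - signClip s x) ^ 2 ≤ (s - x) ^ 2 := by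
  unfold signClip
  split_ifs with hs
  · rcases le_total 0 x with hx | hx
    · rw [max_eq_left hx]
    · rw [max_eq_right hx]; nlinarith
  · rcases le_total x 0 with hx | hx
    · rw [min_eq_left hx]
    · rw [min_eq_right hx]; nlinarith

theorem sq_sub_signClip_lt (h : signClip s x ≠ x) : (s - signClip s x) ^ 2 < (s - x) ^ 2 := by
  unfold signClip at *
  split_ifs at h ⊢ with hs
  · rcases le_or_gt 0 x with hx | hx
    · exact absurd (max_eq_left hx) h
    · rw [max_eq_right hx.le]; nlinarith
  · rcases le_or_gt x 0 with hx | hx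
    · exact absurd (min_eq_left hx) h
    · rw [min_eq_right hx.le]; nlinarith

theorem abs_signClip_le : |signClip s x| ≤ |x| := by
  unfold signClip
  split_ifs
  · rw [abs_of_nonneg (le_max_right x 0)]
    exact max_le (le_abs_self x) (abs_nonneg x)
  · rw [abs_of_nonpos (min_le_right x 0), ← max_neg_neg, neg_zero]
    exact max_le (neg_le_abs x) (abs_nonneg x)

variable (a b : ℝ)

theorem cost_signClip_eq :
    a * max (-signClip s x) 0 + b * max (signClip s x) 0 =
      (if 0 ≤ s then b else a) * |signClip s x| := by
  unfold signClip
  split_ifs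
  · have h : 0 ≤ max x 0 := le_max_right x 0
    rw [max_eq_right (neg_nonpos.mpr h), max_eq_left h, abs_of_nonneg h]
    ring
  · have h : min x 0 ≤ 0 := min_le_right x 0
    rw [max_eq_left (neg_nonneg.mpr h), max_eq_right h, abs_of_nonpos h]
    ring

theorem cost_signClip_le {a b : ℝ} (ha : 0 ≤ a) (hb : 0 ≤ b) :
    a * max (-signClip s x) 0 + b * max (signClip s x) 0 ≤ a * max (-x) 0 + b * max x 0 := by
  unfold signClip
  split_ifs
  · rw [max_eq_right (neg_nonpos.mpr (le_max_right x 0)), max_eq_left (le_max_right x 0)]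
    nlinarith [le_max_right (-x) 0]
  · rw [← max_neg_neg, neg_zero, max_eq_right (min_le_right x 0),
      max_eq_left (le_max_right (-x) 0)]
    nlinarith [le_max_right x 0]

end SignClip

section OrthantProjection

variable {ι : Type*}

noncomputable def orthantProj (r δ : EuclideanSpace ℝ ι) : EuclideanSpace ℝ ι :=
  WithLp.toLp 2 fun i => signClip (r i) (δ i)

@[simp]
theorem orthantProj_apply (r δ : EuclideanSpace ℝ ι) (i : ι) :
    orthantProj r δ i = signClip (r i) (δ i) := rfl

variable [Fintype ι]

theorem norm_sub_sq_eq_sum (r δ : EuclideanSpace ℝ ι) : ‖r - δ‖ ^ 2 = ∑ i, (r i - δ i) ^ 2 := by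
  simp [EuclideanSpace.norm_sq_eq, Real.norm_eq_abs, sq_abs]

theorem norm_sub_orthantProj_lt {r δ : EuclideanSpace ℝ ι} (h : orthantProj r δ ≠ δ) :
    ‖r - orthantProj r δ‖ < ‖r - δ‖ := by
  obtain ⟨i, hi⟩ : ∃ i, signClip (r i) (δ i) ≠ δ i := by
    by_contra! h'
    exact h (PiLp.ext h')
  refine lt_of_pow_lt_pow_left₀ 2 (norm_nonneg _) ?_
  simp only [norm_sub_sq_eq_sum, orthantProj_apply]
  exact Finset.sum_lt_sum (fun j _ => sq_sub_signClip_le _ _)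
    ⟨i, Finset.mem_univ i, sq_sub_signClip_lt _ _ hi⟩

end OrthantProjection

section CostBall

variable {d : ℕ} {a b : Fin d → ℝ} {r : EuclideanSpace ℝ (Fin d)}

theorem cbar_orthantProj (δ : EuclideanSpace ℝ (Fin d)) :
    cbar a b (orthantProj r δ) =
      ∑ i, (if 0 ≤ r i then b i else a i) * |orthantProj r δ i| :=
  Finset.sum_congr rfl fun _ _ => cost_signClip_eq _ _ _ _

theorem cbar_orthantProj_le (ha : ∀ i, 0 ≤ a i) (hb : ∀ i, 0 ≤ b i)
    (δ : EuclideanSpace ℝ (Fin d)) : cbar a b (orthantProj r δ) ≤ cbar a b δ :=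
  Finset.sum_le_sum fun i _ => cost_signClip_le _ _ (ha i) (hb i)

theorem mapsTo_orthantProj_costBall_union_wl1Ball (ha : ∀ i, 0 ≤ a i) (hb : ∀ i, 0 ≤ b i)
    (ε : ℝ) :
    MapsTo (orthantProj r)
      (costBall a b ε ∪ wl1Ball (fun i => if 0 ≤ r i then b i else a i) ε)
      (costBall a b ε ∩ wl1Ball (fun i => if 0 ≤ r i then b i else a i) ε) := by
  have hw : ∀ i, 0 ≤ (if 0 ≤ r i then b i else a i) := fun i => by
    split_ifs
    exacts [hb i, ha i]
  have hl1 : ∀ δ, ∑ i, (if 0 ≤ r i then b i else a i) * |orthantProj r δ i| ≤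
      ∑ i, (if 0 ≤ r i then b i else a i) * |δ i| := fun δ =>
    Finset.sum_le_sum fun i _ => mul_le_mul_of_nonneg_left (abs_signClip_le _ _) (hw i)
  rintro δ (hδ | hδ) <;> simp only [costBall, wl1Ball, mem_inter_iff, mem_ofPred_eq,
    ← cbar_orthantProj, and_self] at hδ ⊢
  · exact (cbar_orthantProj_le ha hb δ).trans hδ
  · exact ((cbar_orthantProj δ).trans_le (hl1 δ)).trans hδ

end CostBall

theorem stmt_5_general {d : ℕ} (a b : Fin d → ℝ) (ha : ∀ i, 0 < a i) (hb : ∀ i, 0 < b i)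
    (ε : ℝ) (r : EuclideanSpace ℝ (Fin d))
    (w : Fin d → ℝ) (hw : ∀ i, w i = if 0 ≤ r i then b i else a i) :
    ∀ δstar : EuclideanSpace ℝ (Fin d),
      (δstar ∈ costBall a b ε ∧ ∀ δ ∈ costBall a b ε, ‖r - δstar‖ ≤ ‖r - δ‖) ↔
      (δstar ∈ wl1Ball w ε ∧ ∀ δ ∈ wl1Ball w ε, ‖r - δstar‖ ≤ ‖r - δ‖) := by
  obtain rfl : w = fun i => if 0 ≤ r i then b i else a i := funext hw
  exact mem_and_forall_le_iff_of_mapsTo_union_inter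
    (mapsTo_orthantProj_costBall_union_wl1Ball (fun i => (ha i).le) (fun i => (hb i).le) ε)
    fun _ => norm_sub_orthantProj_lt

/-- With sign-selected weights `w i = b i` if `r i ≥ 0` and `w i = a i` otherwise,
a point is a Euclidean-nearest point of the asymmetric cost ball `K(ε)` to `r` iff
it is a Euclidean-nearest point of the symmetric weighted ℓ1 ball `L(ε)` to `r`. -/
theorem stmt_5 {d : ℕ} (a b : Fin d → ℝ) (ha : ∀ i, 0 < a i) (hb : ∀ i, 0 < b i)
    (ε : ℝ) (hε : 0 ≤ ε) (r : EuclideanSpace ℝ (Fin d))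
    (w : Fin d → ℝ) (hw : ∀ i, w i = if 0 ≤ r i then b i else a i) :
    ∀ δstar : EuclideanSpace ℝ (Fin d),
      (δstar ∈ costBall a b ε ∧ ∀ δ ∈ costBall a b ε, ‖r - δstar‖ ≤ ‖r - δ‖) ↔
      (δstar ∈ wl1Ball w ε ∧ ∀ δ ∈ wl1Ball w ε, ‖r - δstar‖ ≤ ‖r - δ‖) :=
  stmt_5_general a b ha hb ε r w hw
end

section
/- Let d ∈ ℕ, let w z : Fin d → ℝ satisfy w i > 0 and z i ≥ 0 for all i, and let ε ≥ 0 with ∑ i, w i * z i > ε. Suppose λ ≥ 0 satisfies ∑ i, w i * max (z i − λ * w i) 0 = ε. Then the soft-thresholded vector δ* with coordinates δ* i = max (z i − λ * w i) 0 is the unique minimizer of the Euclidean distance ‖z − δ‖ over the weighted ℓ1 ball {δ ∈ EuclideanSpace ℝ (Fin d) | ∑ i, w i * |δ i| ≤ ε}; i.e., δ* is the Euclidean projection of z onto this ball. -/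
/-!
The residual `r = z - δ*` has coordinates `min (z i) (λ w i)`, so `|r i| ≤ λ w i`, with equality
wherever `δ* i ≠ 0`. Hence `⟪r, δ⟫ ≤ λ ∑ w i |δ i| ≤ λ ε = ⟪r, δ*⟫` for every `δ` in the ball,
which is the variational inequality characterising the projection onto a convex set; the
Pythagorean inequality `‖z - δ*‖² + ‖δ - δ*‖² ≤ ‖z - δ‖²` then gives (strict) minimality.
-/

open scoped RealInnerProductSpace

section Projection

variable {E : Type*} [NormedAddCommGroup E] [InnerProductSpace ℝ E] {z p q : E}

theorem norm_sub_sq_add_norm_sub_sq_le_of_inner_le_zero (h : ⟪z - p, q - p⟫ ≤ 0) :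
    ‖z - p‖ ^ 2 + ‖q - p‖ ^ 2 ≤ ‖z - q‖ ^ 2 := by
  have hsplit : z - q = (z - p) - (q - p) := by abel
  rw [hsplit, norm_sub_sq_real (z - p) (q - p)]
  linarith

theorem norm_sub_le_norm_sub_of_inner_le_zero (h : ⟪z - p, q - p⟫ ≤ 0) :
    ‖z - p‖ ≤ ‖z - q‖ := by
  refine le_of_pow_le_pow_left₀ two_ne_zero (norm_nonneg _) ?_
  linarith [norm_sub_sq_add_norm_sub_sq_le_of_inner_le_zero h, sq_nonneg ‖q - p‖]

theorem norm_sub_lt_norm_sub_of_inner_le_zero (h : ⟪z - p, q - p⟫ ≤ 0) (hqp : q ≠ p) :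
    ‖z - p‖ < ‖z - q‖ := by
  refine lt_of_pow_lt_pow_left₀ 2 (norm_nonneg _) ?_
  have : 0 < ‖q - p‖ := norm_pos_iff.mpr (sub_ne_zero.mpr hqp)
  linarith [norm_sub_sq_add_norm_sub_sq_le_of_inner_le_zero h, pow_pos this 2]

end Projection

section SoftThreshold

theorem abs_sub_max_sub_zero_le {z t : ℝ} (hz : 0 ≤ z) (ht : 0 ≤ t) :
    |z - max (z - t) 0| ≤ t := by
  rcases le_total (z - t) 0 with h | h
  · rw [max_eq_right h, sub_zero, abs_of_nonneg hz]; linarith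
  · rw [max_eq_left h, sub_sub_cancel, abs_of_nonneg ht]

theorem sub_max_sub_zero_mul_self (z t : ℝ) :
    (z - max (z - t) 0) * max (z - t) 0 = t * |max (z - t) 0| := by
  rcases le_total (z - t) 0 with h | h
  · simp [max_eq_right h]
  · rw [max_eq_left h, sub_sub_cancel, abs_of_nonneg h]

variable {ι : Type*} [Fintype ι]

theorem inner_le_mul_sum_mul_abs {r δ : EuclideanSpace ℝ ι} {w : ι → ℝ} {lam : ℝ}
    (hr : ∀ i, |r i| ≤ lam * w i) : ⟪r, δ⟫ ≤ lam * ∑ i, w i * |δ i| := by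
  simp only [PiLp.inner_apply, RCLike.inner_apply, conj_trivial, Finset.mul_sum]
  refine Finset.sum_le_sum fun i _ => ?_
  calc δ i * r i ≤ |δ i * r i| := le_abs_self _
    _ = |δ i| * |r i| := abs_mul _ _
    _ ≤ |δ i| * (lam * w i) := mul_le_mul_of_nonneg_left (hr i) (abs_nonneg _)
    _ = lam * (w i * |δ i|) := by ring

theorem inner_sub_le_zero_of_eq_max_sub_zero {w : ι → ℝ} {z δstar δ : EuclideanSpace ℝ ι}
    {lam : ℝ} (hw : ∀ i, 0 ≤ w i) (hz : ∀ i, 0 ≤ z i) (hlam : 0 ≤ lam)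
    (hδstar : ∀ i, δstar i = max (z i - lam * w i) 0)
    (hδ : ∑ i, w i * |δ i| ≤ ∑ i, w i * |δstar i|) :
    ⟪z - δstar, δ - δstar⟫ ≤ 0 := by
  have hresidual : ∀ i, |(z - δstar) i| ≤ lam * w i := fun i => by
    rw [PiLp.sub_apply, hδstar]
    exact abs_sub_max_sub_zero_le (hz i) (mul_nonneg hlam (hw i))
  have hattained : ⟪z - δstar, δstar⟫ = lam * ∑ i, w i * |δstar i| := by
    simp only [PiLp.inner_apply, RCLike.inner_apply, conj_trivial, PiLp.sub_apply,
      Finset.mul_sum]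
    refine Finset.sum_congr rfl fun i _ => ?_
    rw [mul_comm, hδstar, sub_max_sub_zero_mul_self]
    ring
  rw [inner_sub_right, hattained]
  linarith [inner_le_mul_sum_mul_abs (δ := δ) hresidual, mul_le_mul_of_nonneg_left hδ hlam]

end SoftThreshold

theorem stmt_7_general {d : ℕ} (w : Fin d → ℝ) (z : EuclideanSpace ℝ (Fin d))
    (hw : ∀ i, 0 < w i) (hz : ∀ i, 0 ≤ z i)
    (ε : ℝ) (lam : ℝ) (hlam : 0 ≤ lam) (hexact : ∑ i, w i * max (z i - lam * w i) 0 = ε)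
    (δstar : EuclideanSpace ℝ (Fin d)) (hδstar : ∀ i, δstar i = max (z i - lam * w i) 0) :
    (∑ i, w i * |δstar i| ≤ ε) ∧
      ∀ δ : EuclideanSpace ℝ (Fin d), (∑ i, w i * |δ i| ≤ ε) →
        ‖z - δstar‖ ≤ ‖z - δ‖ ∧ (δ ≠ δstar → ‖z - δstar‖ < ‖z - δ‖) := by
  have hradius : ∑ i, w i * |δstar i| = ε := by
    rw [← hexact]
    exact Finset.sum_congr rfl fun i _ => by rw [hδstar i, abs_of_nonneg (le_max_right _ _)]
  refine ⟨hradius.le, fun δ hδ => ?_⟩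
  have hvar := inner_sub_le_zero_of_eq_max_sub_zero (fun i => (hw i).le) hz hlam hδstar
    (hδ.trans hradius.ge)
  exact ⟨norm_sub_le_norm_sub_of_inner_le_zero hvar, norm_sub_lt_norm_sub_of_inner_le_zero hvar⟩

/-- If `λ ≥ 0` exactly exhausts the budget, i.e. `∑ i, w i * max (z i − λ w i) 0 = ε`,
then the soft-thresholded vector `δ* i = max (z i − λ w i) 0` is the unique minimizer of
the Euclidean distance to `z` over the weighted ℓ1 ball `{δ | ∑ i, w i * |δ i| ≤ ε}`. -/
theorem stmt_7 {d : ℕ} (w : Fin d → ℝ) (z : EuclideanSpace ℝ (Fin d))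
    (hw : ∀ i, 0 < w i) (hz : ∀ i, 0 ≤ z i)
    (ε : ℝ) (hε : 0 ≤ ε) (hout : ∑ i, w i * z i > ε)
    (lam : ℝ) (hlam : 0 ≤ lam) (hexact : ∑ i, w i * max (z i - lam * w i) 0 = ε)
    (δstar : EuclideanSpace ℝ (Fin d)) (hδstar : ∀ i, δstar i = max (z i - lam * w i) 0) :
    (∑ i, w i * |δstar i| ≤ ε) ∧
      ∀ δ : EuclideanSpace ℝ (Fin d), (∑ i, w i * |δ i| ≤ ε) →
        ‖z - δstar‖ ≤ ‖z - δ‖ ∧ (δ ≠ δstar → ‖z - δstar‖ < ‖z - δ‖) :=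
  stmt_7_general w z hw hz ε lam hlam hexact δstar hδstar
end
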